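/- arXiv:2101.06964 — 2 statements merged into one kernel-verified Lean document; each statement's English description precedes it below -/
import Mathlib

section
/- With μ_n = (1/n)∑_{i=1}^n δ_{(i,0)} and ν_{n,n} = μ_n P_{π/(2n)} on ℝ², the martingale 1-Wasserstein value satisfies M₁(μ_n, ν_{n,n}) = 1 for every n ≥ 1. -/
open MeasureTheory Filter
open scoped BoundedContinuousFunction ENNReal Topology

noncomputable section

/-- The plane with the Euclidean norm. -/
abbrev R2 : Type := EuclideanSpace ℝ (Fin 2)

/-- The point `(a, b)` of the Euclidean plane. -/
def pt (a b : ℝ) : R2 := (WithLp.equiv 2 (Fin 2 → ℝ)).symm ![a, b]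

/-- The unit vector at angle `θ`. -/
def dir (θ : ℝ) : R2 := pt (Real.cos θ) (Real.sin θ)

/-- The one-step kernel `P_θ` of the simple random walk along the line of angle `θ`. -/
def Pker (θ : ℝ) (x : R2) : Measure R2 :=
  (2 : ℝ≥0∞)⁻¹ • (Measure.dirac (x + dir θ) + Measure.dirac (x - dir θ))

/-- The measure `μ_m = (1/m) ∑_{i=1}^m δ_{(i,0)}`. -/
def muM (m : ℕ) : Measure R2 :=
  (m : ℝ≥0∞)⁻¹ • ∑ i ∈ Finset.Icc 1 m, Measure.dirac (pt i 0)

/-- The coupling `μ(Id, P)` of `μ` with conditional law `P(x,·)` given `x`. -/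
def couple (μ : Measure R2) (P : R2 → Measure R2) : Measure (R2 × R2) :=
  μ.bind (fun x => (P x).map (fun y => (x, y)))

/-- `π` is a coupling of `μ` and `ν`. -/
def IsCoupling {E F : Type*} [MeasurableSpace E] [MeasurableSpace F]
    (μ : Measure E) (ν : Measure F) (π : Measure (E × F)) : Prop :=
  IsProbabilityMeasure π ∧ π.map Prod.fst = μ ∧ π.map Prod.snd = ν

/-- `π` is a martingale coupling of `μ` and `ν`: a coupling such that
`∫ φ(x)(y - x) dπ(x,y) = 0` for every bounded continuous `φ`. -/
def IsMartCoupling {E : Type*} [MeasurableSpace E] [NormedAddCommGroup E] [NormedSpace ℝ E]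
    (μ ν : Measure E) (π : Measure (E × E)) : Prop :=
  IsCoupling μ ν π ∧ ∀ φ : E →ᵇ ℝ, ∫ p, φ p.1 • (p.2 - p.1) ∂π = 0

/-- The 1-Wasserstein distance: infimum of `∫ ‖x - y‖ dπ` over couplings. -/
def W1 {E : Type*} [MeasurableSpace E] [NormedAddCommGroup E] (μ ν : Measure E) : ℝ :=
  sInf {r | ∃ π : Measure (E × E), IsCoupling μ ν π ∧ ∫ p, ‖p.1 - p.2‖ ∂π = r}

/-- The value `V^M_c(μ,ν)` of the martingale optimal transport problem. -/
def MOTval {E : Type*} [MeasurableSpace E] [NormedAddCommGroup E] [NormedSpace ℝ E]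
    (c : E → E → ℝ) (μ ν : Measure E) : ℝ :=
  sInf {r | ∃ π : Measure (E × E), IsMartCoupling μ ν π ∧ ∫ p, c p.1 p.2 ∂π = r}

/-- Convex order: `∫ φ dμ ≤ ∫ φ dν` for every integrable convex `φ`. -/
def ConvexOrder {E : Type*} [MeasurableSpace E] [NormedAddCommGroup E] [NormedSpace ℝ E]
    (μ ν : Measure E) : Prop :=
  ∀ φ : E → ℝ, ConvexOn ℝ Set.univ φ → Integrable φ ν → Integrable φ μ →
    ∫ x, φ x ∂μ ≤ ∫ x, φ x ∂ν

namespace S14aux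

lemma pt_apply0 (a b : ℝ) : pt a b 0 = a := rfl
lemma pt_apply1 (a b : ℝ) : pt a b 1 = b := rfl

lemma pt_add (a b a' b' : ℝ) : pt a b + pt a' b' = pt (a + a') (b + b') := by
  ext i; fin_cases i <;> rfl

lemma pt_sub (a b a' b' : ℝ) : pt a b - pt a' b' = pt (a - a') (b - b') := by
  ext i; fin_cases i <;> rfl

lemma pt_neg (a b : ℝ) : -pt a b = pt (-a) (-b) := by
  ext i; fin_cases i <;> rfl

lemma norm_pt (a b : ℝ) : ‖pt a b‖ = Real.sqrt (a ^ 2 + b ^ 2) := by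
  rw [EuclideanSpace.norm_eq]
  congr 1
  rw [Fin.sum_univ_two]
  simp [pt_apply0, pt_apply1, sq_abs]

lemma pt_inj {a b a' b' : ℝ} (h : pt a b = pt a' b') : a = a' ∧ b = b' :=
  ⟨congrArg (fun v : R2 => v 0) h, congrArg (fun v : R2 => v 1) h⟩

lemma norm_dir (θ : ℝ) : ‖dir θ‖ = 1 := by
  rw [dir, norm_pt]
  rw [show Real.cos θ ^ 2 + Real.sin θ ^ 2 = 1 by rw [add_comm]; exact Real.sin_sq_add_cos_sq θ]
  exact Real.sqrt_one

variable {α : Type*} [MeasurableSpace α] {E : Type*} [NormedAddCommGroup E]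
  [NormedSpace ℝ E] [CompleteSpace E]

lemma sum_dirac_apply {ι : Type*} (F : Finset ι) (c : ι → ℝ≥0∞) (z : ι → α) {A : Set α}
    (hA : MeasurableSet A) :
    (∑ i ∈ F, c i • Measure.dirac (z i)) A = ∑ i ∈ F, c i * A.indicator 1 (z i) := by
  rw [Measure.finset_sum_apply]
  exact Finset.sum_congr rfl fun i _ => by
    rw [Measure.smul_apply, Measure.dirac_apply' _ hA, smul_eq_mul]

lemma integrable_sum_dirac {ι : Type*} {F : Finset ι} {c : ι → ℝ≥0∞} (hc : ∀ i ∈ F, c i ≠ ∞)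
    {z : ι → α} {f : α → E} (hf : StronglyMeasurable f) :
    Integrable f (∑ i ∈ F, c i • Measure.dirac (z i)) := by
  rw [integrable_finset_sum_measure]
  intro i hi
  rcases eq_or_ne (c i) 0 with h0 | h0
  · simp [h0]
  · rw [integrable_smul_measure h0 (hc i hi)]
    refine ⟨hf.aestronglyMeasurable, ?_⟩
    refine lt_of_le_of_lt (le_of_eq (lintegral_dirac' _ ?_)) (by simp)
    exact hf.enorm

lemma integral_sum_dirac {ι : Type*} {F : Finset ι} {c : ι → ℝ≥0∞} (hc : ∀ i ∈ F, c i ≠ ∞)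
    {z : ι → α} {f : α → E} (hf : StronglyMeasurable f) :
    ∫ a, f a ∂(∑ i ∈ F, c i • Measure.dirac (z i)) = ∑ i ∈ F, (c i).toReal • f (z i) := by
  rw [integral_finset_sum_measure (fun i hi => by
    rcases eq_or_ne (c i) 0 with h0 | h0
    · simp [h0]
    · rw [integrable_smul_measure h0 (hc i hi)]
      exact ⟨hf.aestronglyMeasurable,
        lt_of_le_of_lt (le_of_eq (lintegral_dirac' _ hf.enorm)) (by simp)⟩)]
  refine Finset.sum_congr rfl fun i _ => ?_
  rw [integral_smul_measure, integral_dirac' _ _ hf]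

lemma measure_finset_coe [MeasurableSingletonClass α] (ρ : Measure α) (G : Finset α) :
    ρ ↑G = ∑ z ∈ G, ρ {z} := by
  rw [show (↑G : Set α) = ⋃ z ∈ G, {z} from (Set.biUnion_of_singleton _).symm]
  rw [measure_biUnion_finset ?_ (fun z _ => measurableSet_singleton z)]
  intro a _ b _ hab
  simp [Set.disjoint_singleton, hab]

lemma measure_repr [MeasurableSingletonClass α] (ρ : Measure α) (F : Finset α)
    (h : ρ (↑F)ᶜ = 0) : ρ = ∑ z ∈ F, ρ {z} • Measure.dirac z := by
  classical
  ext A hA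
  rw [show (∑ z ∈ F, ρ {z} • Measure.dirac z) = ∑ z ∈ F, (fun w => ρ {w}) z • Measure.dirac (id z) from rfl,
    sum_dirac_apply F _ id hA]
  have h2 : ρ (A \ ↑F) = 0 := measure_mono_null (fun x hx => hx.2) h
  have h1 : ρ A = ρ (A ∩ ↑F) := by
    rw [← measure_inter_add_diff A F.measurableSet, h2, add_zero]
  have h3 : A ∩ ↑F = ↑(F.filter (· ∈ A)) := by
    ext x; simp [and_comm]
  rw [h1, h3, measure_finset_coe, Finset.sum_filter]
  refine Finset.sum_congr rfl fun z _ => ?_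
  by_cases hz : z ∈ A
  · simp [hz, Set.indicator_of_mem]
  · simp [hz, Set.indicator_of_notMem]


end S14aux

namespace S14aux

/-! ### Points -/

def X (i : ℕ) : R2 := pt i 0
def YP (θ : ℝ) (j : ℕ) : R2 := X j + dir θ
def YM (θ : ℝ) (j : ℕ) : R2 := X j - dir θ

lemma X_inj {i j : ℕ} (h : X i = X j) : i = j := by
  have := (pt_inj h).1
  exact_mod_cast this

lemma YP_sub_X (θ : ℝ) (j k : ℕ) : YP θ j - X k = pt ((j : ℝ) - k + Real.cos θ) (Real.sin θ) := by
  rw [YP, X, X, dir, pt_add, pt_sub]; ring_nf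

lemma YM_sub_X (θ : ℝ) (j k : ℕ) : YM θ j - X k = pt ((j : ℝ) - k - Real.cos θ) (-Real.sin θ) := by
  rw [YM, X, X, dir, pt_sub, pt_sub]; ring_nf

lemma X_sub_YP (θ : ℝ) (i : ℕ) : X i - YP θ i = -dir θ := by
  rw [YP, sub_add_cancel_left]

lemma X_sub_YM (θ : ℝ) (i : ℕ) : X i - YM θ i = dir θ := by
  rw [YM, sub_sub_cancel]

/-! ### Bump functions -/

def bump (v : R2) : R2 →ᵇ ℝ :=
  BoundedContinuousFunction.mkOfBound
    ⟨fun x => max 0 (1 - dist x v),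
      continuous_const.max (continuous_const.sub (continuous_id.dist continuous_const))⟩ 1 (by
      intro x y
      have h1x : (0:ℝ) ≤ max 0 (1 - dist x v) := le_max_left _ _
      have h1y : (0:ℝ) ≤ max 0 (1 - dist y v) := le_max_left _ _
      have h2x : max 0 (1 - dist x v) ≤ 1 :=
        max_le zero_le_one (by have := dist_nonneg (x := x) (y := v); linarith)
      have h2y : max 0 (1 - dist y v) ≤ 1 :=
        max_le zero_le_one (by have := dist_nonneg (x := y) (y := v); linarith)
      rw [Real.dist_eq, abs_sub_le_iff]
      constructor <;> simp only [ContinuousMap.coe_mk] <;> linarith)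

lemma bump_self (v : R2) : bump v v = 1 := by
  show max 0 (1 - dist v v) = 1
  simp

lemma bump_far {v x : R2} (h : 1 ≤ dist x v) : bump v x = 0 := by
  show max 0 (1 - dist x v) = 0
  rw [max_eq_left (by linarith)]

lemma bump_X {i k : ℕ} (h : i ≠ k) : bump (X k) (X i) = 0 := by
  refine bump_far ?_
  rw [dist_eq_norm, X, X, pt_sub, sub_self, norm_pt]
  rw [show ((i:ℝ) - k) ^ 2 + 0 ^ 2 = ((i:ℝ) - k)^2 by ring, Real.sqrt_sq_eq_abs]
  rw [show ((i : ℝ) - k) = ((i - k : ℤ) : ℝ) by push_cast; ring, ← Int.cast_abs]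
  have : (i : ℤ) ≠ (k : ℤ) := by exact_mod_cast h
  exact_mod_cast Int.one_le_abs (sub_ne_zero.2 this)

variable {θ : ℝ} (hs : Real.sin θ ≠ 0)

lemma YP_inj {i j : ℕ} (h : YP θ i = YP θ j) : i = j :=
  X_inj (by rwa [YP, YP, add_left_inj] at h)

lemma YM_inj {i j : ℕ} (h : YM θ i = YM θ j) : i = j :=
  X_inj (by rwa [YM, YM, sub_left_inj] at h)

include hs in
lemma YP_ne_YM (i j : ℕ) : YP θ i ≠ YM θ j := by
  intro h
  have h2 : (YP θ i - X 0) 1 = (YM θ j - X 0) 1 := by rw [h]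
  rw [YP_sub_X, YM_sub_X, pt_apply1, pt_apply1] at h2
  exact hs (by linarith)


/-! ### Measures -/

local instance : DecidableEq R2 := Classical.decEq _

def Zf (θ : ℝ) : ℕ × Bool → R2 × R2 := fun p => (X p.1, if p.2 then YP θ p.1 else YM θ p.1)

def FF (n : ℕ) : Finset (ℕ × Bool) := (Finset.Icc 1 n) ×ˢ (Finset.univ : Finset Bool)

def pi0 (n : ℕ) (θ : ℝ) : Measure (R2 × R2) :=
  ∑ p ∈ FF n, (2 * n : ℝ≥0∞)⁻¹ • Measure.dirac (Zf θ p)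

def Fmu (n : ℕ) : Finset R2 := (Finset.Icc 1 n).image X

def Fnu (n : ℕ) (θ : ℝ) : Finset R2 :=
  (Finset.Icc 1 n).image (YP θ) ∪ (Finset.Icc 1 n).image (YM θ)

lemma inv2n (n : ℕ) : (2 * n : ℝ≥0∞)⁻¹ = 2⁻¹ * (n : ℝ≥0∞)⁻¹ :=
  ENNReal.mul_inv (Or.inl two_ne_zero) (Or.inl ENNReal.ofNat_ne_top)

lemma two_inv2n (n : ℕ) : 2 * (2 * n : ℝ≥0∞)⁻¹ = (n : ℝ≥0∞)⁻¹ := by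
  rw [inv2n, ← mul_assoc, ENNReal.mul_inv_cancel two_ne_zero ENNReal.ofNat_ne_top, one_mul]

lemma hPmeas (θ : ℝ) : Measurable (Pker θ) := by
  refine Measure.measurable_of_measurable_coe _ fun s hs => ?_
  simp only [Pker, Measure.smul_apply, Measure.coe_add, Pi.add_apply,
    Measure.dirac_apply' _ hs, smul_eq_mul]
  exact (((measurable_one.indicator hs).comp (measurable_id.add_const (dir θ))).add
    ((measurable_one.indicator hs).comp (measurable_id.sub_const (dir θ)))).const_mul _

lemma muM_eq (n : ℕ) : muM n = ∑ i ∈ Finset.Icc 1 n, (n : ℝ≥0∞)⁻¹ • Measure.dirac (X i) := by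
  rw [muM, Finset.smul_sum]; rfl

lemma nu_eq (n : ℕ) (θ : ℝ) :
    (muM n).bind (Pker θ) = ∑ p ∈ FF n, (2 * n : ℝ≥0∞)⁻¹ • Measure.dirac ((Zf θ p).2) := by
  ext A hA
  rw [Measure.bind_apply hA (hPmeas θ).aemeasurable]
  rw [muM_eq]
  rw [show ∑ i ∈ Finset.Icc 1 n, (n : ℝ≥0∞)⁻¹ • Measure.dirac (X i)
      = ∑ i ∈ Finset.Icc 1 n, ((fun _ => (n : ℝ≥0∞)⁻¹) i) • Measure.dirac (X i) from rfl]
  rw [lintegral_finset_sum_measure]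
  rw [sum_dirac_apply _ _ _ hA, FF, Finset.sum_product]
  refine Finset.sum_congr rfl fun i _ => ?_
  rw [lintegral_smul_measure, lintegral_dirac' _
    (show Measurable fun a => Pker θ a A from (Measure.measurable_coe hA).comp (hPmeas θ))]
  simp only [Pker, Measure.smul_apply, Measure.coe_add, Pi.add_apply,
    Measure.dirac_apply' _ hA, smul_eq_mul, Fintype.sum_bool, Zf]
  rw [show (X i + dir θ) = YP θ i from rfl, show (X i - dir θ) = YM θ i from rfl]
  rw [mul_add, inv2n]
  norm_num
  ring

lemma mem_Fnu_P (n : ℕ) (θ : ℝ) {j : ℕ} (hj : j ∈ Finset.Icc 1 n) : YP θ j ∈ Fnu n θ :=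
  Finset.mem_union_left _ (Finset.mem_image_of_mem _ hj)

lemma mem_Fnu_M (n : ℕ) (θ : ℝ) {j : ℕ} (hj : j ∈ Finset.Icc 1 n) : YM θ j ∈ Fnu n θ :=
  Finset.mem_union_right _ (Finset.mem_image_of_mem _ hj)

lemma muM_singleton (n : ℕ) {i : ℕ} (hi : i ∈ Finset.Icc 1 n) :
    muM n {X i} = (n : ℝ≥0∞)⁻¹ := by
  classical
  rw [muM_eq,
    show ∑ k ∈ Finset.Icc 1 n, (n : ℝ≥0∞)⁻¹ • Measure.dirac (X k)
      = ∑ k ∈ Finset.Icc 1 n, ((fun _ => (n : ℝ≥0∞)⁻¹) k) • Measure.dirac (X k) from rfl,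
    sum_dirac_apply _ _ _ (measurableSet_singleton _)]
  have hterm : ∀ k ∈ Finset.Icc 1 n, (n : ℝ≥0∞)⁻¹ * ({X i} : Set R2).indicator 1 (X k)
      = if k = i then (n : ℝ≥0∞)⁻¹ else 0 := by
    intro k _
    by_cases h : k = i
    · subst h; simp [Set.indicator_of_mem]
    · rw [if_neg h, Set.indicator_of_notMem, mul_zero]
      simp only [Set.mem_singleton_iff]
      exact fun hh => h (X_inj hh)
  rw [Finset.sum_congr rfl hterm, Finset.sum_ite_eq' _ _ _, if_pos hi]

lemma muM_compl (n : ℕ) : muM n ((↑(Fmu n) : Set R2))ᶜ = 0 := by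
  rw [muM_eq,
    show ∑ k ∈ Finset.Icc 1 n, (n : ℝ≥0∞)⁻¹ • Measure.dirac (X k)
      = ∑ k ∈ Finset.Icc 1 n, ((fun _ => (n : ℝ≥0∞)⁻¹) k) • Measure.dirac (X k) from rfl,
    sum_dirac_apply _ _ _ (Fmu n).measurableSet.compl]
  refine Finset.sum_eq_zero fun k hk => ?_
  rw [Set.indicator_of_notMem, mul_zero]
  simp only [Set.mem_compl_iff, not_not]
  exact Finset.mem_image_of_mem _ hk

lemma nu_compl (n : ℕ) (θ : ℝ) : (muM n).bind (Pker θ) ((↑(Fnu n θ) : Set R2))ᶜ = 0 := by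
  rw [nu_eq, sum_dirac_apply _ _ _ (Fnu n θ).measurableSet.compl]
  refine Finset.sum_eq_zero fun p hp => ?_
  rw [Set.indicator_of_notMem, mul_zero]
  simp only [Set.mem_compl_iff, not_not]
  rw [FF, Finset.mem_product] at hp
  rcases Bool.eq_false_or_eq_true p.2 with h | h
  · simpa [Zf, h] using mem_Fnu_P n θ hp.1
  · simpa [Zf, h] using mem_Fnu_M n θ hp.1


/-! ### The canonical coupling is a martingale coupling -/

lemma pi0_eq (n : ℕ) (θ : ℝ) :
    pi0 n θ = ∑ p ∈ FF n, ((fun _ => (2 * n : ℝ≥0∞)⁻¹) p) • Measure.dirac (Zf θ p) := rfl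

lemma card_FF (n : ℕ) : (FF n).card = n * 2 := by
  rw [FF, Finset.card_product, Nat.card_Icc]
  simp

lemma pi0_prob {n : ℕ} (hn : 1 ≤ n) : IsProbabilityMeasure (pi0 n θ) := by
  constructor
  rw [pi0_eq, sum_dirac_apply _ _ _ MeasurableSet.univ]
  simp only [Set.indicator_univ, Pi.one_apply, mul_one, Finset.sum_const, card_FF,
    nsmul_eq_mul]
  rw [show ((n * 2 : ℕ) : ℝ≥0∞) = 2 * (n : ℝ≥0∞) by push_cast; ring]
  exact ENNReal.mul_inv_cancel
    (mul_ne_zero two_ne_zero (Nat.cast_ne_zero.2 (by omega))) (by finiteness)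

lemma pi0_fst (n : ℕ) (θ : ℝ) : (pi0 n θ).map Prod.fst = muM n := by
  ext A hA
  rw [Measure.map_apply measurable_fst hA, pi0_eq,
    sum_dirac_apply _ _ _ (measurable_fst hA)]
  rw [muM_eq, show ∑ i ∈ Finset.Icc 1 n, (n : ℝ≥0∞)⁻¹ • Measure.dirac (X i)
      = ∑ i ∈ Finset.Icc 1 n, ((fun _ => (n : ℝ≥0∞)⁻¹) i) • Measure.dirac (X i) from rfl,
    sum_dirac_apply _ _ _ hA, FF, Finset.sum_product]
  refine Finset.sum_congr rfl fun i _ => ?_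
  have hind : ∀ b : Bool, (Prod.fst ⁻¹' A).indicator (1 : R2 × R2 → ℝ≥0∞) (Zf θ (i, b))
      = A.indicator 1 (X i) := by
    intro b
    by_cases h : X i ∈ A
    · rw [Set.indicator_of_mem h, Set.indicator_of_mem (by exact h)]; rfl
    · rw [Set.indicator_of_notMem h, Set.indicator_of_notMem (by exact h)]
  simp only [Fintype.sum_bool, hind]
  rw [← two_inv2n n]
  ring

lemma pi0_snd (n : ℕ) (θ : ℝ) : (pi0 n θ).map Prod.snd = (muM n).bind (Pker θ) := by
  ext A hA
  rw [Measure.map_apply measurable_snd hA, pi0_eq,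
    sum_dirac_apply _ _ _ (measurable_snd hA), nu_eq,
    show ∑ p ∈ FF n, (2 * n : ℝ≥0∞)⁻¹ • Measure.dirac ((Zf θ p).2)
      = ∑ p ∈ FF n, ((fun _ => (2 * n : ℝ≥0∞)⁻¹) p) • Measure.dirac ((Zf θ p).2) from rfl,
    sum_dirac_apply _ _ _ hA]
  refine Finset.sum_congr rfl fun p _ => ?_
  congr 1

lemma pi0_mart {n : ℕ} (hn : 1 ≤ n) (θ : ℝ) (φ : R2 →ᵇ ℝ) :
    ∫ p, φ p.1 • (p.2 - p.1) ∂(pi0 n θ) = 0 := by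
  have hsm : StronglyMeasurable fun p : R2 × R2 => φ p.1 • (p.2 - p.1) :=
    ((φ.continuous.comp continuous_fst).smul (continuous_snd.sub continuous_fst)).stronglyMeasurable
  rw [pi0_eq, integral_sum_dirac (fun p _ =>
      ENNReal.inv_ne_top.2 (mul_ne_zero two_ne_zero (Nat.cast_ne_zero.2 (by omega)))) hsm,
    FF, Finset.sum_product]
  refine Finset.sum_eq_zero fun i _ => ?_
  rw [Fintype.sum_bool]
  rw [show Zf θ (i, true) = (X i, YP θ i) by simp [Zf],
    show Zf θ (i, false) = (X i, YM θ i) by simp [Zf]]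
  rw [show (X i, YP θ i).2 - (X i, YP θ i).1 = dir θ by
      show YP θ i - X i = dir θ; rw [YP, add_sub_cancel_left],
    show (X i, YM θ i).2 - (X i, YM θ i).1 = -dir θ by
      show YM θ i - X i = -dir θ; rw [YM, sub_sub_cancel_left]]
  rw [smul_neg, smul_neg, add_neg_cancel]

lemma pi0_martcoupling {n : ℕ} (hn : 1 ≤ n) (θ : ℝ) :
    IsMartCoupling (muM n) ((muM n).bind (Pker θ)) (pi0 n θ) :=
  ⟨⟨pi0_prob hn, pi0_fst n θ, pi0_snd n θ⟩, pi0_mart hn θ⟩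


/-! ### Combinatorial core: uniqueness of the martingale coupling -/

lemma core {n : ℕ} {w : ℝ} (A B : ℕ → ℕ → ℝ)
    (hA : ∀ i j, 0 ≤ A i j) (hB : ∀ i j, 0 ≤ B i j)
    (colA : ∀ j ∈ Finset.Icc 1 n, ∑ i ∈ Finset.Icc 1 n, A i j = w)
    (colB : ∀ j ∈ Finset.Icc 1 n, ∑ i ∈ Finset.Icc 1 n, B i j = w)
    (row : ∀ i ∈ Finset.Icc 1 n, ∑ j ∈ Finset.Icc 1 n, (A i j + B i j) = 2 * w)
    (e1 : ∀ k ∈ Finset.Icc 1 n,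
      ∑ j ∈ Finset.Icc 1 n, A k j = ∑ j ∈ Finset.Icc 1 n, B k j)
    (e2 : ∀ k ∈ Finset.Icc 1 n,
      ∑ j ∈ Finset.Icc 1 n, (A k j + B k j) * ((j : ℝ) - k) = 0) :
    ∀ k ∈ Finset.Icc 1 n, ∀ j ∈ Finset.Icc 1 n, j ≠ k → A k j = 0 ∧ B k j = 0 := by
  intro k
  induction k using Nat.strong_induction_on with
  | _ k IH =>
    intro hk
    -- diagonal values of earlier rows
    have diag : ∀ m ∈ Finset.Icc 1 n, m < k → A m m = w := by
      intro m hm hmk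
      have hdm := IH m hmk hm
      have hsA : ∑ j ∈ Finset.Icc 1 n, A m j = A m m :=
        Finset.sum_eq_single_of_mem m hm (fun j hj hne => (hdm j hj hne).1)
      have hsB : ∑ j ∈ Finset.Icc 1 n, B m j = B m m :=
        Finset.sum_eq_single_of_mem m hm (fun j hj hne => (hdm j hj hne).2)
      have hr := row m hm
      rw [Finset.sum_add_distrib, hsA, hsB] at hr
      have he := e1 m hm
      rw [hsA, hsB] at he
      linarith
    have step1 : ∀ j ∈ Finset.Icc 1 n, j < k → A k j = 0 ∧ B k j = 0 := by
      intro j hj hjk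
      have hAjj : A j j = w := diag j hj hjk
      have hBjj : B j j = w := by
        have hdm := IH j hjk hj
        have hsA : ∑ l ∈ Finset.Icc 1 n, A j l = A j j :=
          Finset.sum_eq_single_of_mem j hj (fun l hl hne => (hdm l hl hne).1)
        have hsB : ∑ l ∈ Finset.Icc 1 n, B j l = B j j :=
          Finset.sum_eq_single_of_mem j hj (fun l hl hne => (hdm l hl hne).2)
        have he := e1 j hj
        rw [hsA, hsB] at he
        linarith
      have hkj : k ≠ j := (Nat.ne_of_lt hjk).symm
      constructor
      · have hcol := colA j hj
        rw [← Finset.add_sum_erase _ _ hj, hAjj] at hcol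
        have hz : ∑ i ∈ (Finset.Icc 1 n).erase j, A i j = 0 := by linarith
        exact (Finset.sum_eq_zero_iff_of_nonneg (fun i _ => hA i j)).1 hz k
          (Finset.mem_erase.2 ⟨hkj, hk⟩)
      · have hcol := colB j hj
        rw [← Finset.add_sum_erase _ _ hj, hBjj] at hcol
        have hz : ∑ i ∈ (Finset.Icc 1 n).erase j, B i j = 0 := by linarith
        exact (Finset.sum_eq_zero_iff_of_nonneg (fun i _ => hB i j)).1 hz k
          (Finset.mem_erase.2 ⟨hkj, hk⟩)
    have step2 : ∀ j ∈ Finset.Icc 1 n, k < j → A k j = 0 ∧ B k j = 0 := by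
      intro j hj hkj
      have hnn : ∀ l ∈ Finset.Icc 1 n, 0 ≤ (A k l + B k l) * ((l : ℝ) - k) := by
        intro l hl
        rcases lt_trichotomy l k with h | h | h
        · rcases step1 l hl h with ⟨h1, h2⟩
          rw [h1, h2]; ring_nf; exact le_of_eq rfl
        · subst h; simp
        · have h1 : (0:ℝ) ≤ (l : ℝ) - k := by
            have : (k:ℝ) < l := by exact_mod_cast h
            linarith
          have h2 : 0 ≤ A k l + B k l := by have := hA k l; have := hB k l; linarith
          positivity
      have hz := (Finset.sum_eq_zero_iff_of_nonneg hnn).1 (e2 k hk) j hj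
      have hpos : (0:ℝ) < (j : ℝ) - k := by
        have : (k:ℝ) < j := by exact_mod_cast hkj
        linarith
      have hzz : A k j + B k j = 0 := by
        rcases mul_eq_zero.1 hz with h | h
        · exact h
        · exact absurd h (ne_of_gt hpos)
      constructor
      · have := hA k j; have := hB k j; linarith
      · have := hA k j; have := hB k j; linarith
    intro j hj hjk
    rcases lt_or_gt_of_ne hjk with h | h
    · exact step1 j hj h
    · exact step2 j hj h


/-! ### Singleton masses of ν -/

lemma nu_singletonP {θ : ℝ} (hs : Real.sin θ ≠ 0) (n : ℕ) {j : ℕ} (hj : j ∈ Finset.Icc 1 n) :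
    (muM n).bind (Pker θ) {YP θ j} = (2 * n : ℝ≥0∞)⁻¹ := by
  rw [nu_eq, sum_dirac_apply _ _ _ (measurableSet_singleton _), FF, Finset.sum_product]
  have hterm : ∀ i ∈ Finset.Icc 1 n,
      (∑ b : Bool, (2 * n : ℝ≥0∞)⁻¹ * ({YP θ j} : Set R2).indicator 1 (Zf θ (i, b)).2)
      = if i = j then (2 * n : ℝ≥0∞)⁻¹ else 0 := by
    intro i _
    have hYM : ({YP θ j} : Set R2).indicator (1 : R2 → ℝ≥0∞) (YM θ i) = 0 :=
      Set.indicator_of_notMem (by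
        simp only [Set.mem_singleton_iff]
        exact fun h => YP_ne_YM hs j i h.symm) _
    rw [Fintype.sum_bool, show (Zf θ (i, true)).2 = YP θ i by simp [Zf],
      show (Zf θ (i, false)).2 = YM θ i by simp [Zf], hYM, mul_zero, add_zero]
    by_cases h : i = j
    · subst h; rw [if_pos rfl, Set.indicator_of_mem (Set.mem_singleton _), Pi.one_apply, mul_one]
    · rw [if_neg h, Set.indicator_of_notMem (by
        simp only [Set.mem_singleton_iff]; exact fun hh => h (YP_inj hh)), mul_zero]
  rw [Finset.sum_congr rfl hterm, Finset.sum_ite_eq' _ _ _, if_pos hj]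

lemma nu_singletonM {θ : ℝ} (hs : Real.sin θ ≠ 0) (n : ℕ) {j : ℕ} (hj : j ∈ Finset.Icc 1 n) :
    (muM n).bind (Pker θ) {YM θ j} = (2 * n : ℝ≥0∞)⁻¹ := by
  rw [nu_eq, sum_dirac_apply _ _ _ (measurableSet_singleton _), FF, Finset.sum_product]
  have hterm : ∀ i ∈ Finset.Icc 1 n,
      (∑ b : Bool, (2 * n : ℝ≥0∞)⁻¹ * ({YM θ j} : Set R2).indicator 1 (Zf θ (i, b)).2)
      = if i = j then (2 * n : ℝ≥0∞)⁻¹ else 0 := by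
    intro i _
    have hYP : ({YM θ j} : Set R2).indicator (1 : R2 → ℝ≥0∞) (YP θ i) = 0 :=
      Set.indicator_of_notMem (by
        simp only [Set.mem_singleton_iff]
        exact fun h => YP_ne_YM hs i j h) _
    rw [Fintype.sum_bool, show (Zf θ (i, true)).2 = YP θ i by simp [Zf],
      show (Zf θ (i, false)).2 = YM θ i by simp [Zf], hYP, mul_zero, zero_add]
    by_cases h : i = j
    · subst h; rw [if_pos rfl, Set.indicator_of_mem (Set.mem_singleton _), Pi.one_apply, mul_one]
    · rw [if_neg h, Set.indicator_of_notMem (by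
        simp only [Set.mem_singleton_iff]; exact fun hh => h (YM_inj hh)), mul_zero]
  rw [Finset.sum_congr rfl hterm, Finset.sum_ite_eq' _ _ _, if_pos hj]

/-! ### Every martingale coupling has cost 1 -/

lemma X_injOn {n : ℕ} : ∀ x ∈ Finset.Icc 1 n, ∀ y ∈ Finset.Icc 1 n, X x = X y → x = y :=
  fun x _ y _ h => X_inj h

lemma YP_injOn {n : ℕ} {θ : ℝ} :
    ∀ x ∈ Finset.Icc 1 n, ∀ y ∈ Finset.Icc 1 n, YP θ x = YP θ y → x = y :=
  fun x _ y _ h => YP_inj h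

lemma YM_injOn {n : ℕ} {θ : ℝ} :
    ∀ x ∈ Finset.Icc 1 n, ∀ y ∈ Finset.Icc 1 n, YM θ x = YM θ y → x = y :=
  fun x _ y _ h => YM_inj h

lemma Fnu_disj {n : ℕ} {θ : ℝ} (hs : Real.sin θ ≠ 0) :
    Disjoint ((Finset.Icc 1 n).image (YP θ)) ((Finset.Icc 1 n).image (YM θ)) := by
  rw [Finset.disjoint_left]
  rintro y hy1 hy2
  obtain ⟨i, _, rfl⟩ := Finset.mem_image.1 hy1
  obtain ⟨j, _, hj⟩ := Finset.mem_image.1 hy2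
  exact YP_ne_YM hs i j hj.symm

def coord (i : Fin 2) : R2 →ₗ[ℝ] ℝ where
  toFun := fun v => v i
  map_add' := fun _ _ => rfl
  map_smul' := fun _ _ => rfl

lemma coord_apply (i : Fin 2) (v : R2) : coord i v = v i := rfl

theorem cost_eq_one {n : ℕ} (hn : 1 ≤ n) {θ : ℝ} (hs : Real.sin θ ≠ 0)
    {π : Measure (R2 × R2)}
    (hmc : IsMartCoupling (muM n) ((muM n).bind (Pker θ)) π) :
    ∫ p, ‖p.1 - p.2‖ ∂π = 1 := by
  classical
  obtain ⟨⟨hprob, hfst, hsnd⟩, hmart⟩ := hmc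
  haveI := hprob
  set I := Finset.Icc 1 n with hI
  set F : Finset (R2 × R2) := Fmu n ×ˢ Fnu n θ with hF
  -- π is concentrated on F
  have hπF : π (↑F : Set (R2 × R2))ᶜ = 0 := by
    have hsub : (↑F : Set (R2 × R2))ᶜ ⊆
        (Prod.fst ⁻¹' (↑(Fmu n) : Set R2)ᶜ) ∪ (Prod.snd ⁻¹' (↑(Fnu n θ) : Set R2)ᶜ) := by
      intro p hp
      have : ¬(p.1 ∈ (↑(Fmu n) : Set R2) ∧ p.2 ∈ (↑(Fnu n θ) : Set R2)) := by
        simpa [hF, Finset.coe_product, Set.mem_prod] using hp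
      rcases not_and_or.1 this with h | h
      · exact Or.inl h
      · exact Or.inr h
    refine measure_mono_null hsub (measure_union_null ?_ ?_)
    · rw [← Measure.map_apply measurable_fst (Fmu n).measurableSet.compl, hfst]
      exact muM_compl n
    · rw [← Measure.map_apply measurable_snd (Fnu n θ).measurableSet.compl, hsnd]
      exact nu_compl n θ
  have hrepr : π = ∑ z ∈ F, π {z} • Measure.dirac z := measure_repr π F hπF
  have hfin : ∀ z : R2 × R2, π {z} ≠ ∞ := fun z => measure_ne_top π _
  -- abbreviations
  set A : ℕ → ℕ → ℝ := fun i j => (π {(X i, YP θ j)}).toReal with hA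
  set B : ℕ → ℕ → ℝ := fun i j => (π {(X i, YM θ j)}).toReal with hB
  have hA0 : ∀ i j, 0 ≤ A i j := fun _ _ => ENNReal.toReal_nonneg
  have hB0 : ∀ i j, 0 ≤ B i j := fun _ _ => ENNReal.toReal_nonneg
  set w : ℝ := (2 * (n : ℝ))⁻¹ with hw
  have hwE : ((2 * n : ℝ≥0∞)⁻¹).toReal = w := by
    rw [ENNReal.toReal_inv, hw]
    norm_num
  have hnne : (n : ℝ) ≠ 0 := Nat.cast_ne_zero.2 (by omega)
  -- column sums
  have colP : ∀ j ∈ I, ∑ i ∈ I, A i j = w := by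
    intro j hj
    have e0 : (π.map Prod.snd) {YP θ j} = (2 * n : ℝ≥0∞)⁻¹ := by
      rw [hsnd]; exact nu_singletonP hs n hj
    rw [Measure.map_apply measurable_snd (measurableSet_singleton _)] at e0
    rw [hrepr] at e0
    rw [show (∑ z ∈ F, π {z} • Measure.dirac z) = ∑ z ∈ F, (fun y => π {y}) z • Measure.dirac (id z)
      from rfl, sum_dirac_apply _ _ _ (measurable_snd (measurableSet_singleton _))] at e0
    rw [hF, Finset.sum_product] at e0
    have hterm : ∀ x ∈ Fmu n, (∑ y ∈ Fnu n θ,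
        π {(x, y)} * (Prod.snd ⁻¹' {YP θ j} : Set (R2 × R2)).indicator 1 (id (x, y)))
        = π {(x, YP θ j)} := by
      intro x _
      have hterm2 : ∀ y ∈ Fnu n θ,
          π {(x, y)} * (Prod.snd ⁻¹' {YP θ j} : Set (R2 × R2)).indicator 1 (id (x, y))
          = if y = YP θ j then π {(x, y)} else 0 := by
        intro y _
        by_cases h : y = YP θ j
        · rw [if_pos h, Set.indicator_of_mem (by exact h), Pi.one_apply, mul_one]
        · rw [if_neg h, Set.indicator_of_notMem (by exact h), mul_zero]
      rw [Finset.sum_congr rfl hterm2, Finset.sum_ite_eq' _ _ _, if_pos (mem_Fnu_P n θ hj)]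
    rw [Finset.sum_congr rfl hterm] at e0
    rw [Fmu, Finset.sum_image X_injOn] at e0
    have := congrArg ENNReal.toReal e0
    rw [ENNReal.toReal_sum (fun i _ => hfin _), hwE] at this
    exact this
  have colM : ∀ j ∈ I, ∑ i ∈ I, B i j = w := by
    intro j hj
    have e0 : (π.map Prod.snd) {YM θ j} = (2 * n : ℝ≥0∞)⁻¹ := by
      rw [hsnd]; exact nu_singletonM hs n hj
    rw [Measure.map_apply measurable_snd (measurableSet_singleton _)] at e0
    rw [hrepr] at e0
    rw [show (∑ z ∈ F, π {z} • Measure.dirac z) = ∑ z ∈ F, (fun y => π {y}) z • Measure.dirac (id z)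
      from rfl, sum_dirac_apply _ _ _ (measurable_snd (measurableSet_singleton _))] at e0
    rw [hF, Finset.sum_product] at e0
    have hterm : ∀ x ∈ Fmu n, (∑ y ∈ Fnu n θ,
        π {(x, y)} * (Prod.snd ⁻¹' {YM θ j} : Set (R2 × R2)).indicator 1 (id (x, y)))
        = π {(x, YM θ j)} := by
      intro x _
      have hterm2 : ∀ y ∈ Fnu n θ,
          π {(x, y)} * (Prod.snd ⁻¹' {YM θ j} : Set (R2 × R2)).indicator 1 (id (x, y))
          = if y = YM θ j then π {(x, y)} else 0 := by
        intro y _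
        by_cases h : y = YM θ j
        · rw [if_pos h, Set.indicator_of_mem (by exact h), Pi.one_apply, mul_one]
        · rw [if_neg h, Set.indicator_of_notMem (by exact h), mul_zero]
      rw [Finset.sum_congr rfl hterm2, Finset.sum_ite_eq' _ _ _, if_pos (mem_Fnu_M n θ hj)]
    rw [Finset.sum_congr rfl hterm] at e0
    rw [Fmu, Finset.sum_image X_injOn] at e0
    have := congrArg ENNReal.toReal e0
    rw [ENNReal.toReal_sum (fun i _ => hfin _), hwE] at this
    exact this
  -- row sums
  have rowE : ∀ i ∈ I, ∑ j ∈ I, (A i j + B i j) = 2 * w := by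
    intro i hi
    have e0 : (π.map Prod.fst) {X i} = (n : ℝ≥0∞)⁻¹ := by
      rw [hfst]; exact muM_singleton n hi
    rw [Measure.map_apply measurable_fst (measurableSet_singleton _)] at e0
    rw [hrepr] at e0
    rw [show (∑ z ∈ F, π {z} • Measure.dirac z) = ∑ z ∈ F, (fun y => π {y}) z • Measure.dirac (id z)
      from rfl, sum_dirac_apply _ _ _ (measurable_fst (measurableSet_singleton _))] at e0
    rw [hF, Finset.sum_product] at e0
    have hterm : ∀ x ∈ Fmu n, (∑ y ∈ Fnu n θ,
        π {(x, y)} * (Prod.fst ⁻¹' {X i} : Set (R2 × R2)).indicator 1 (id (x, y)))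
        = if x = X i then ∑ y ∈ Fnu n θ, π {(x, y)} else 0 := by
      intro x _
      by_cases h : x = X i
      · rw [if_pos h]
        refine Finset.sum_congr rfl fun y _ => ?_
        rw [Set.indicator_of_mem (by exact h), Pi.one_apply, mul_one]
      · rw [if_neg h]
        refine Finset.sum_eq_zero fun y _ => ?_
        rw [Set.indicator_of_notMem (by exact h), mul_zero]
    rw [Finset.sum_congr rfl hterm, Fmu, Finset.sum_image X_injOn,
      show (∑ k ∈ I, if X k = X i then ∑ y ∈ Fnu n θ, π {(X k, y)} else 0)
        = ∑ k ∈ I, if k = i then ∑ y ∈ Fnu n θ, π {(X k, y)} else 0 from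
        Finset.sum_congr rfl fun k _ => by
          by_cases h : k = i
          · subst h; rw [if_pos rfl, if_pos rfl]
          · rw [if_neg (fun hh => h (X_inj hh)), if_neg h],
      Finset.sum_ite_eq' _ _ _, if_pos hi] at e0
    rw [Fnu, Finset.sum_union (Fnu_disj hs), Finset.sum_image YP_injOn,
      Finset.sum_image YM_injOn] at e0
    have hfin1 : (∑ j ∈ I, π {(X i, YP θ j)}) ≠ ∞ :=
      (ENNReal.sum_lt_top.2 fun j _ => (hfin _).lt_top).ne
    have hfin2 : (∑ j ∈ I, π {(X i, YM θ j)}) ≠ ∞ :=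
      (ENNReal.sum_lt_top.2 fun j _ => (hfin _).lt_top).ne
    have := congrArg ENNReal.toReal e0
    rw [ENNReal.toReal_add hfin1 hfin2, ENNReal.toReal_sum (fun j _ => hfin _),
      ENNReal.toReal_sum (fun j _ => hfin _)] at this
    have hnE : ((n : ℝ≥0∞)⁻¹).toReal = 2 * w := by
      rw [ENNReal.toReal_inv, hw, show ((n : ℝ≥0∞)).toReal = (n : ℝ) by simp,
        show (2 * (n:ℝ))⁻¹ = 2⁻¹ * (n:ℝ)⁻¹ by rw [mul_inv]]
      ring
    rw [hnE] at this
    rw [Finset.sum_add_distrib]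
    exact this
  -- martingale equations
  have hmartk : ∀ k ∈ I,
      (∑ j ∈ I, A k j • (YP θ j - X k)) + (∑ j ∈ I, B k j • (YM θ j - X k)) = 0 := by
    intro k hk
    have hint := hmart (bump (X k))
    have hsm : StronglyMeasurable fun p : R2 × R2 => bump (X k) p.1 • (p.2 - p.1) :=
      (((bump (X k)).continuous.comp continuous_fst).smul
        (continuous_snd.sub continuous_fst)).stronglyMeasurable
    rw [hrepr, show (∑ z ∈ F, π {z} • Measure.dirac z)
        = ∑ z ∈ F, (fun y => π {y}) z • Measure.dirac (id z) from rfl,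
      integral_sum_dirac (fun z _ => hfin z) hsm] at hint
    rw [hF, Finset.sum_product, Fmu, Finset.sum_image X_injOn] at hint
    have hterm : ∀ i ∈ I, (∑ y ∈ Fnu n θ,
        (π {(X i, y)}).toReal • (bump (X k) (id (X i, y)).1 • ((id (X i, y)).2 - (id (X i, y)).1)))
        = if i = k then ∑ y ∈ Fnu n θ, (π {(X k, y)}).toReal • (y - X k) else 0 := by
      intro i _
      by_cases h : i = k
      · subst h
        rw [if_pos rfl]
        refine Finset.sum_congr rfl fun y _ => ?_
        show (π {(X i, y)}).toReal • (bump (X i) (X i) • (y - X i)) = _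
        rw [bump_self, one_smul]
      · rw [if_neg h]
        refine Finset.sum_eq_zero fun y _ => ?_
        show (π {(X i, y)}).toReal • (bump (X k) (X i) • (y - X i)) = 0
        rw [bump_X h, zero_smul, smul_zero]
    rw [Finset.sum_congr rfl hterm, Finset.sum_ite_eq' _ _ _, if_pos hk] at hint
    rw [Fnu, Finset.sum_union (Fnu_disj hs), Finset.sum_image YP_injOn,
      Finset.sum_image YM_injOn] at hint
    exact hint
  -- coordinate equations
  have e1 : ∀ k ∈ I, ∑ j ∈ I, A k j = ∑ j ∈ I, B k j := by
    intro k hk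
    have h1 := congrArg (fun v : R2 => coord 1 v) (hmartk k hk)
    simp only [map_add, map_sum, _root_.map_smul, map_zero, smul_eq_mul] at h1
    have hA1 : ∀ j ∈ I, A k j * coord 1 (YP θ j - X k) = A k j * Real.sin θ := fun j _ => by
      rw [coord_apply, YP_sub_X, pt_apply1]
    have hB1 : ∀ j ∈ I, B k j * coord 1 (YM θ j - X k) = B k j * (-Real.sin θ) := fun j _ => by
      rw [coord_apply, YM_sub_X, pt_apply1]
    rw [Finset.sum_congr rfl hA1, Finset.sum_congr rfl hB1,
      ← Finset.sum_mul, ← Finset.sum_mul] at h1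
    have h4 : ((∑ j ∈ I, A k j) - (∑ j ∈ I, B k j)) * Real.sin θ = 0 := by
      linear_combination h1
    rcases mul_eq_zero.1 h4 with h | h
    · linarith [sub_eq_zero.1 h]
    · exact absurd h hs
  have e2 : ∀ k ∈ I, ∑ j ∈ I, (A k j + B k j) * ((j : ℝ) - k) = 0 := by
    intro k hk
    have h1 := congrArg (fun v : R2 => coord 0 v) (hmartk k hk)
    simp only [map_add, map_sum, _root_.map_smul, map_zero, smul_eq_mul] at h1
    have hA1 : ∀ j ∈ I, A k j * coord 0 (YP θ j - X k)
        = A k j * ((j : ℝ) - k + Real.cos θ) := fun j _ => by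
      rw [coord_apply, YP_sub_X, pt_apply0]
    have hB1 : ∀ j ∈ I, B k j * coord 0 (YM θ j - X k)
        = B k j * ((j : ℝ) - k - Real.cos θ) := fun j _ => by
      rw [coord_apply, YM_sub_X, pt_apply0]
    rw [Finset.sum_congr rfl hA1, Finset.sum_congr rfl hB1] at h1
    have hd := e1 k hk
    have expandA : ∑ j ∈ I, A k j * ((j:ℝ) - k + Real.cos θ)
        = (∑ j ∈ I, A k j * ((j:ℝ) - k)) + Real.cos θ * ∑ j ∈ I, A k j := by
      rw [Finset.mul_sum, ← Finset.sum_add_distrib]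
      exact Finset.sum_congr rfl fun j _ => by ring
    have expandB : ∑ j ∈ I, B k j * ((j:ℝ) - k - Real.cos θ)
        = (∑ j ∈ I, B k j * ((j:ℝ) - k)) - Real.cos θ * ∑ j ∈ I, B k j := by
      rw [Finset.mul_sum, ← Finset.sum_sub_distrib]
      exact Finset.sum_congr rfl fun j _ => by ring
    rw [expandA, expandB] at h1
    have expandAB : ∑ j ∈ I, (A k j + B k j) * ((j:ℝ) - k)
        = (∑ j ∈ I, A k j * ((j:ℝ) - k)) + ∑ j ∈ I, B k j * ((j:ℝ) - k) := by
      rw [← Finset.sum_add_distrib]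
      exact Finset.sum_congr rfl fun j _ => by ring
    rw [expandAB]
    have hcc : Real.cos θ * ∑ j ∈ I, A k j = Real.cos θ * ∑ j ∈ I, B k j := by rw [hd]
    linarith
  -- conclusion of the combinatorial core
  have hcore := core A B hA0 hB0 colP colM rowE e1 e2
  have hdiag : ∀ i ∈ I, A i i = w ∧ B i i = w := by
    intro i hi
    have hsA : ∑ j ∈ I, A i j = A i i :=
      Finset.sum_eq_single_of_mem i hi (fun j hj hne => (hcore i hi j hj hne).1)
    have hsB : ∑ j ∈ I, B i j = B i i :=
      Finset.sum_eq_single_of_mem i hi (fun j hj hne => (hcore i hi j hj hne).2)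
    have hr := rowE i hi
    rw [Finset.sum_add_distrib, hsA, hsB] at hr
    have he := e1 i hi
    rw [hsA, hsB] at he
    constructor <;> linarith
  -- compute the cost
  have hsmcost : StronglyMeasurable fun p : R2 × R2 => ‖p.1 - p.2‖ :=
    (continuous_fst.sub continuous_snd).norm.stronglyMeasurable
  rw [hrepr, show (∑ z ∈ F, π {z} • Measure.dirac z)
      = ∑ z ∈ F, (fun y => π {y}) z • Measure.dirac (id z) from rfl,
    integral_sum_dirac (fun z _ => hfin z) hsmcost]
  rw [hF, Finset.sum_product, Fmu, Finset.sum_image X_injOn]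
  have hterm : ∀ i ∈ I, (∑ y ∈ Fnu n θ,
      (π {(X i, y)}).toReal • ‖(id (X i, y)).1 - (id (X i, y)).2‖) = 2 * w := by
    intro i hi
    rw [Fnu, Finset.sum_union (Fnu_disj hs), Finset.sum_image YP_injOn,
      Finset.sum_image YM_injOn]
    have t1 : ∑ j ∈ I, (π {(X i, YP θ j)}).toReal • ‖(id (X i, YP θ j)).1 - (id (X i, YP θ j)).2‖
        = w := by
      rw [show (∑ j ∈ I, (π {(X i, YP θ j)}).toReal • ‖(id (X i, YP θ j)).1 - (id (X i, YP θ j)).2‖)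
          = ∑ j ∈ I, A i j * ‖X i - YP θ j‖ from rfl]
      rw [Finset.sum_eq_single_of_mem i hi (fun j hj hne => by
        rw [(hcore i hi j hj hne).1, zero_mul])]
      rw [X_sub_YP, norm_neg, norm_dir, mul_one, (hdiag i hi).1]
    have t2 : ∑ j ∈ I, (π {(X i, YM θ j)}).toReal • ‖(id (X i, YM θ j)).1 - (id (X i, YM θ j)).2‖
        = w := by
      rw [show (∑ j ∈ I, (π {(X i, YM θ j)}).toReal • ‖(id (X i, YM θ j)).1 - (id (X i, YM θ j)).2‖)
          = ∑ j ∈ I, B i j * ‖X i - YM θ j‖ from rfl]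
      rw [Finset.sum_eq_single_of_mem i hi (fun j hj hne => by
        rw [(hcore i hi j hj hne).2, zero_mul])]
      rw [X_sub_YM, norm_dir, mul_one, (hdiag i hi).2]
    rw [t1, t2]
    ring
  rw [Finset.sum_congr rfl hterm, Finset.sum_const, hI, Nat.card_Icc, nsmul_eq_mul]
  rw [hw]
  field_simp
  ring_nf
  simp

end S14aux


/-- `M₁(μ_n, ν_{n,n}) = 1` for every `n ≥ 1`. -/
theorem stmt14 (n : ℕ) (hn : 1 ≤ n) :
    MOTval (fun x y => ‖x - y‖) (muM n) ((muM n).bind (Pker (Real.pi / (2 * n)))) = 1 := by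
  set θ : ℝ := Real.pi / (2 * n) with hθ
  have hnpos : (1:ℝ) ≤ n := by exact_mod_cast hn
  have hθpos : 0 < θ := div_pos Real.pi_pos (by linarith)
  have hθlt : θ < Real.pi := div_lt_self Real.pi_pos (by linarith)
  have hs : Real.sin θ ≠ 0 := ne_of_gt (Real.sin_pos_of_pos_of_lt_pi hθpos hθlt)
  have hset : {r | ∃ π : Measure (R2 × R2),
      IsMartCoupling (muM n) ((muM n).bind (Pker θ)) π ∧
      ∫ p, (fun x y => ‖x - y‖) p.1 p.2 ∂π = r} = {1} := by
    ext r
    simp only [Set.mem_setOf_eq, Set.mem_singleton_iff]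
    constructor
    · rintro ⟨π', hmc, hr⟩
      rw [← hr]
      exact S14aux.cost_eq_one hn hs hmc
    · rintro rfl
      exact ⟨S14aux.pi0 n θ, S14aux.pi0_martcoupling hn θ, S14aux.cost_eq_one hn hs (S14aux.pi0_martcoupling hn θ)⟩
  show sInf _ = 1
  rw [hset]
  exact csInf_singleton 1
end
end

section
/- For μ_n = (1/n)∑_{i=1}^n δ_{(i,0)} on ℝ² and P_0(x) = ½(δ_{x+(1,0)} + δ_{x−(1,0)}), one has W₁(μ_n, μ_n P_0) = 1/n. -/
open MeasureTheory Filter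
open scoped BoundedContinuousFunction ENNReal Topology

noncomputable section

/-! ### Auxiliary lemmas -/

lemma pt_apply0 (a b : ℝ) : pt a b 0 = a := rfl
lemma pt_apply1 (a b : ℝ) : pt a b 1 = b := rfl

lemma pt_add (a b c d : ℝ) : pt a b + pt c d = pt (a+c) (b+d) := by
  ext i; fin_cases i <;> simp [pt, WithLp.equiv] <;> rfl

lemma pt_sub (a b c d : ℝ) : pt a b - pt c d = pt (a-c) (b-d) := by
  ext i; fin_cases i <;> simp [pt, WithLp.equiv] <;> rfl

lemma norm_pt (a b : ℝ) : ‖pt a b‖ = Real.sqrt (a^2 + b^2) := by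
  rw [EuclideanSpace.norm_eq]
  simp [Fin.sum_univ_two, pt_apply0, pt_apply1, Real.norm_eq_abs, sq_abs]

lemma norm_pt0 (a : ℝ) : ‖pt a 0‖ = |a| := by
  rw [norm_pt]; simp [Real.sqrt_sq_eq_abs]

lemma dir_zero : dir 0 = pt 1 0 := by simp [dir]

lemma abs_apply0_le (x : R2) : |x 0| ≤ ‖x‖ := by
  rw [EuclideanSpace.norm_eq, Fin.sum_univ_two]
  calc |x 0| = Real.sqrt (‖x 0‖^2) := by
        rw [Real.norm_eq_abs, sq_abs, Real.sqrt_sq_eq_abs]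
  _ ≤ _ := Real.sqrt_le_sqrt (le_add_of_nonneg_right (by positivity))

lemma measurable_Pker0 : Measurable (Pker 0) := by
  apply Measure.measurable_of_measurable_coe
  intro s hs
  simp only [Pker, Measure.smul_apply, Measure.coe_add, Pi.add_apply, smul_eq_mul]
  exact (((Measure.measurable_coe hs).comp
      (Measure.measurable_dirac.comp (measurable_add_const _))).add
    ((Measure.measurable_coe hs).comp
      (Measure.measurable_dirac.comp (measurable_sub_const _)))).const_mul _

lemma sum_Icc_one' {M : Type*} [AddCommMonoid M] (n : ℕ) (f : ℕ → M) :
    ∑ i ∈ Finset.Icc 1 n, f i = ∑ i ∈ Finset.range n, f (1+i) := by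
  rw [← Finset.Ico_add_one_right_eq_Icc, Finset.sum_Ico_eq_sum_range]
  simp

/-- Explicit form of the image measure `μ_n P_0`. -/
lemma nu_eq (n : ℕ) : (muM n).bind (Pker 0)
    = (2 * n : ℝ≥0∞)⁻¹ • ((∑ i ∈ Finset.Icc 1 n, Measure.dirac (pt ((i:ℝ)-1) 0))
        + ∑ i ∈ Finset.Icc 1 n, Measure.dirac (pt ((i:ℝ)+1) 0)) := by
  ext s hs
  rw [Measure.bind_apply hs measurable_Pker0.aemeasurable]
  rw [muM, lintegral_smul_measure, lintegral_finset_sum_measure]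
  have : ∀ i : ℕ, ∫⁻ x, Pker 0 x s ∂(Measure.dirac (pt i 0)) = Pker 0 (pt i 0) s := by
    intro i
    exact lintegral_dirac' _ ((Measure.measurable_coe hs).comp measurable_Pker0)
  simp only [this]
  simp only [Pker, dir_zero, pt_add, pt_sub, Measure.smul_apply, Measure.coe_add,
    Pi.add_apply, smul_eq_mul, Measure.coe_finset_sum, Finset.sum_apply, add_zero, sub_zero]
  rw [ENNReal.mul_inv (Or.inl two_ne_zero) (Or.inl ENNReal.ofNat_ne_top)]
  rw [← Finset.mul_sum, Finset.sum_add_distrib]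
  ring

def Ai (i : ℕ) : ℝ := if i = 1 then 0 else i
def Bi (n i : ℕ) : ℝ := if i = n then n+1 else i

lemma rearrange {M : Type*} [AddCommMonoid M] (n : ℕ) (hn : 1 ≤ n) (F : ℝ → M) :
    ((∑ i ∈ Finset.Icc 1 n, F (Ai i)) + ∑ i ∈ Finset.Icc 1 n, F (Bi n i))
    = (∑ i ∈ Finset.Icc 1 n, F ((i:ℝ)-1)) + ∑ i ∈ Finset.Icc 1 n, F ((i:ℝ)+1) := by
  obtain ⟨m, rfl⟩ : ∃ m, n = m + 1 := ⟨n - 1, by omega⟩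
  simp only [sum_Icc_one']
  rw [Finset.sum_range_succ' (fun i => F (Ai (1+i))) m]
  rw [Finset.sum_range_succ (fun i => F (Bi (m+1) (1+i))) m]
  rw [Finset.sum_range_succ' (fun i => F ((((1+i : ℕ)):ℝ)-1)) m]
  rw [Finset.sum_range_succ (fun i => F ((((1+i : ℕ)):ℝ)+1)) m]
  have e1 : ∀ i ∈ Finset.range m, F (Ai (1+(i+1))) = F (((i:ℝ))+2) := by
    intro i hi
    have : Ai (1+(i+1)) = ((i:ℝ))+2 := by
      unfold Ai; rw [if_neg (by omega)]; push_cast; ring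
    rw [this]
  have e2 : ∀ i ∈ Finset.range m, F (Bi (m+1) (1+i)) = F (((i:ℝ))+1) := by
    intro i hi
    have hlt : i < m := Finset.mem_range.1 hi
    have : Bi (m+1) (1+i) = ((i:ℝ))+1 := by
      unfold Bi; rw [if_neg (by omega)]; push_cast; ring
    rw [this]
  have e3 : ∀ i ∈ Finset.range m, F ((((1+(i+1) : ℕ)):ℝ)-1) = F (((i:ℝ))+1) := by
    intro i hi; norm_num
  have e4 : ∀ i ∈ Finset.range m, F ((((1+i : ℕ)):ℝ)+1) = F (((i:ℝ))+2) := by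
    intro i hi; push_cast; ring_nf
  rw [Finset.sum_congr rfl e1, Finset.sum_congr rfl e2, Finset.sum_congr rfl e3,
    Finset.sum_congr rfl e4]
  have h1 : Ai (1+0) = 0 := by unfold Ai; norm_num
  have h2 : Bi (m+1) (1+m) = ((m+1:ℕ):ℝ)+1 := by unfold Bi; rw [if_pos (by omega)]
  have h3 : (((1+0 : ℕ)):ℝ)-1 = 0 := by norm_num
  have h4 : (((1+m : ℕ)):ℝ)+1 = ((m+1:ℕ):ℝ)+1 := by push_cast; ring
  rw [h1, h2, h3, h4]
  abel

/-- The explicit optimal coupling. -/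
def Cpl (n : ℕ) : Measure (R2 × R2) :=
  (2 * n : ℝ≥0∞)⁻¹ •
    ((∑ i ∈ Finset.Icc 1 n, Measure.dirac ((pt i 0, pt (Ai i) 0) : R2 × R2))
      + ∑ i ∈ Finset.Icc 1 n, Measure.dirac ((pt i 0, pt (Bi n i) 0) : R2 × R2))

lemma integrable_dirac'' {α : Type*} [MeasurableSpace α] [MeasurableSingletonClass α]
    {f : α → ℝ} (hf : StronglyMeasurable f) (a : α) : Integrable f (Measure.dirac a) := by
  refine ⟨hf.aestronglyMeasurable, ?_⟩
  rw [HasFiniteIntegral, lintegral_dirac]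
  exact ENNReal.coe_lt_top

lemma integral_atomic {α : Type*} [MeasurableSpace α] [MeasurableSingletonClass α]
    {ι : Type*} (s : Finset ι) (x : ι → α) (c : ℝ≥0∞) (f : α → ℝ)
    (hf : StronglyMeasurable f) :
    ∫ p, f p ∂(c • ∑ i ∈ s, Measure.dirac (x i)) = c.toReal * ∑ i ∈ s, f (x i) := by
  rw [integral_smul_measure,
    integral_finset_sum_measure (fun i _ => integrable_dirac'' hf (x i))]
  simp only [integral_dirac, smul_eq_mul]

lemma integral_atomic2 {α : Type*} [MeasurableSpace α] [MeasurableSingletonClass α]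
    {ι : Type*} (s : Finset ι) (x y : ι → α) (c : ℝ≥0∞) (f : α → ℝ)
    (hf : StronglyMeasurable f) :
    ∫ p, f p ∂(c • ((∑ i ∈ s, Measure.dirac (x i)) + ∑ i ∈ s, Measure.dirac (y i)))
      = c.toReal * ((∑ i ∈ s, f (x i)) + ∑ i ∈ s, f (y i)) := by
  rw [integral_smul_measure, integral_add_measure
      (integrable_finset_sum_measure.2 (fun i _ => integrable_dirac'' hf (x i)))
      (integrable_finset_sum_measure.2 (fun i _ => integrable_dirac'' hf (y i))),
    integral_finset_sum_measure (fun i _ => integrable_dirac'' hf (x i)),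
    integral_finset_sum_measure (fun i _ => integrable_dirac'' hf (y i))]
  simp only [integral_dirac, smul_eq_mul]

lemma map_finset_sum_meas {α β : Type*} [MeasurableSpace α] [MeasurableSpace β]
    {ι : Type*} (s : Finset ι) (μ : ι → Measure α) {f : α → β} (hf : Measurable f) :
    (∑ i ∈ s, μ i).map f = ∑ i ∈ s, (μ i).map f := by
  classical
  induction s using Finset.induction with
  | empty => simp
  | insert _ _ h ih =>
      rw [Finset.sum_insert h, Measure.map_add _ _ hf, ih, Finset.sum_insert h]

/-- test function -/
def gfun (n : ℕ) (a : ℝ) : ℝ := max (min a ((n:ℝ)+1-a)) 0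

def ftil (n : ℕ) (x : R2) : ℝ := gfun n (x 0)

lemma lip_proj : LipschitzWith 1 (fun x : R2 => x 0) := by
  apply LipschitzWith.of_dist_le_mul
  intro x y
  rw [NNReal.coe_one, one_mul, Real.dist_eq, dist_eq_norm]
  have : x 0 - y 0 = (x - y) 0 := rfl
  rw [this]
  exact abs_apply0_le _

lemma lip_gfun (n : ℕ) : LipschitzWith 1 (gfun n) := by
  have h1 : LipschitzWith 1 (fun a : ℝ => min a ((n:ℝ)+1-a)) := by
    simpa using LipschitzWith.id.min ((LipschitzWith.const ((n:ℝ)+1)).sub LipschitzWith.id)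
  have h : LipschitzWith 1 (fun a : ℝ => max (min a ((n:ℝ)+1-a)) 0) := by
    simpa using h1.max (LipschitzWith.const (0:ℝ))
  exact h

lemma lip_ftil (n : ℕ) : LipschitzWith 1 (ftil n) := by
  have h : LipschitzWith 1 (gfun n ∘ fun x : R2 => x 0) := by
    simpa using (lip_gfun n).comp lip_proj
  exact h

lemma gfun_nonneg (n : ℕ) (a : ℝ) : 0 ≤ gfun n a := le_max_right _ _

lemma gfun_le (n : ℕ) (a : ℝ) : gfun n a ≤ (n:ℝ)+1 := by
  have h0 : (0:ℝ) ≤ (n:ℝ)+1 := by positivity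
  rw [gfun, max_le_iff]
  refine ⟨?_, h0⟩
  rcases le_total a ((n:ℝ)+1-a) with h | h
  · rw [min_eq_left h]; linarith
  · rw [min_eq_right h]; linarith

lemma abs_ftil_le (n : ℕ) (x : R2) : |ftil n x| ≤ (n:ℝ)+1 :=
  abs_le.2 ⟨by have := gfun_nonneg n (x 0); simp [ftil]; linarith,
    gfun_le n (x 0)⟩

lemma gfun_zero (n : ℕ) : gfun n 0 = 0 := by
  have h : (0:ℝ) ≤ (n:ℝ)+1-0 := by
    have : (0:ℝ) ≤ (n:ℝ) := Nat.cast_nonneg n; linarith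
  rw [gfun, min_eq_left h, max_self]

lemma gfun_one (n : ℕ) (hn : 1 ≤ n) : gfun n 1 = 1 := by
  have : (1:ℝ) ≤ (n:ℝ) := by exact_mod_cast hn
  rw [gfun, min_eq_left (by linarith), max_eq_left (by norm_num)]

lemma gfun_n (n : ℕ) (hn : 1 ≤ n) : gfun n (n:ℝ) = 1 := by
  have : (1:ℝ) ≤ (n:ℝ) := by exact_mod_cast hn
  have h : (n:ℝ)+1-(n:ℝ) = 1 := by ring
  rw [gfun, h, min_eq_right (by linarith), max_eq_left (by norm_num)]

lemma gfun_top (n : ℕ) : gfun n ((n:ℝ)+1) = 0 := by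
  have h : (n:ℝ)+1-((n:ℝ)+1) = 0 := by ring
  rw [gfun, h, min_eq_right (by positivity), max_self]

/-- Telescoping identity. -/
lemma tele_sum (n : ℕ) (hn : 1 ≤ n) :
    ((2:ℝ) * ∑ i ∈ Finset.Icc 1 n, gfun n (i:ℝ))
      - ((∑ i ∈ Finset.Icc 1 n, gfun n ((i:ℝ)-1)) + ∑ i ∈ Finset.Icc 1 n, gfun n ((i:ℝ)+1))
    = 2 := by
  have T1 : (∑ i ∈ Finset.Icc 1 n, gfun n (i:ℝ)) - ∑ i ∈ Finset.Icc 1 n, gfun n ((i:ℝ)-1)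
      = gfun n (n:ℝ) - gfun n 0 := by
    rw [← Finset.sum_sub_distrib]
    rw [sum_Icc_one' n (fun i => gfun n (i:ℝ) - gfun n ((i:ℝ)-1))]
    have : ∀ i ∈ Finset.range n,
        gfun n (((1+i:ℕ)):ℝ) - gfun n ((((1+i:ℕ)):ℝ)-1)
          = gfun n (((i+1:ℕ)):ℝ) - gfun n ((i:ℕ):ℝ) := by
      intro i hi
      have c1 : (((1+i:ℕ)):ℝ) = ((i+1:ℕ):ℝ) := by push_cast; ring
      have c2 : (((1+i:ℕ)):ℝ)-1 = ((i:ℕ):ℝ) := by push_cast; ring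
      rw [c2, c1]
    rw [Finset.sum_congr rfl this, Finset.sum_range_sub (fun i => gfun n ((i:ℕ):ℝ)) n]
    norm_num
  have T2 : (∑ i ∈ Finset.Icc 1 n, gfun n ((i:ℝ)+1)) - ∑ i ∈ Finset.Icc 1 n, gfun n (i:ℝ)
      = gfun n ((n:ℝ)+1) - gfun n 1 := by
    rw [← Finset.sum_sub_distrib]
    rw [sum_Icc_one' n (fun i => gfun n ((i:ℝ)+1) - gfun n (i:ℝ))]
    have : ∀ i ∈ Finset.range n,
        gfun n ((((1+i:ℕ)):ℝ)+1) - gfun n (((1+i:ℕ)):ℝ)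
          = gfun n (((i+1:ℕ):ℝ)+1) - gfun n (((i:ℕ):ℝ)+1) := by
      intro i hi
      have c1 : (((1+i:ℕ)):ℝ)+1 = ((i+1:ℕ):ℝ)+1 := by push_cast; ring
      have c2 : (((1+i:ℕ)):ℝ) = ((i:ℕ):ℝ)+1 := by push_cast; ring
      rw [c1, c2]
    rw [Finset.sum_congr rfl this, Finset.sum_range_sub (fun i => gfun n (((i:ℕ):ℝ)+1)) n]
    norm_num
  have v1 := gfun_zero n
  have v2 := gfun_one n hn
  have v3 := gfun_n n hn
  have v4 := gfun_top n
  rw [gfun_n n hn, gfun_zero n] at T1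
  rw [gfun_top n, gfun_one n hn] at T2
  linarith

lemma two_n_ne_zero {n : ℕ} (hn : 1 ≤ n) : (2 * n : ℝ≥0∞) ≠ 0 :=
  mul_ne_zero two_ne_zero (Nat.cast_ne_zero.2 (by omega))

lemma two_n_ne_top {n : ℕ} : (2 * n : ℝ≥0∞) ≠ ⊤ :=
  ENNReal.mul_ne_top ENNReal.ofNat_ne_top (ENNReal.natCast_ne_top n)

lemma Cpl_prob (n : ℕ) (hn : 1 ≤ n) : IsProbabilityMeasure (Cpl n) := by
  constructor
  rw [Cpl, Measure.smul_apply, Measure.coe_add, Pi.add_apply,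
    Measure.finset_sum_apply, Measure.finset_sum_apply]
  simp only [Measure.dirac_apply_of_mem (Set.mem_univ _), Finset.sum_const, Nat.card_Icc,
    Nat.add_sub_cancel, nsmul_eq_mul, mul_one, smul_eq_mul]
  rw [← two_mul, ENNReal.inv_mul_cancel (two_n_ne_zero hn) two_n_ne_top]

lemma Cpl_fst (n : ℕ) (hn : 1 ≤ n) : (Cpl n).map Prod.fst = muM n := by
  rw [Cpl, Measure.map_smul, Measure.map_add _ _ measurable_fst,
    map_finset_sum_meas _ _ measurable_fst, map_finset_sum_meas _ _ measurable_fst]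
  simp only [Measure.map_dirac' measurable_fst]
  rw [muM]
  have h2 : ((∑ i ∈ Finset.Icc 1 n, Measure.dirac ((pt i 0 : R2)))
      + ∑ i ∈ Finset.Icc 1 n, Measure.dirac ((pt i 0 : R2)))
      = (2:ℝ≥0∞) • ∑ i ∈ Finset.Icc 1 n, Measure.dirac ((pt i 0 : R2)) := (two_smul _ _).symm
  rw [h2, smul_smul]
  congr 1
  rw [ENNReal.mul_inv (Or.inl two_ne_zero) (Or.inl ENNReal.ofNat_ne_top),
    mul_comm ((2:ℝ≥0∞))⁻¹, mul_assoc, ENNReal.inv_mul_cancel two_ne_zero ENNReal.ofNat_ne_top,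
    mul_one]

lemma Cpl_snd (n : ℕ) (hn : 1 ≤ n) : (Cpl n).map Prod.snd = (muM n).bind (Pker 0) := by
  rw [Cpl, Measure.map_smul, Measure.map_add _ _ measurable_snd,
    map_finset_sum_meas _ _ measurable_snd, map_finset_sum_meas _ _ measurable_snd]
  simp only [Measure.map_dirac' measurable_snd]
  rw [rearrange n hn (fun a => Measure.dirac ((pt a 0 : R2))), nu_eq n]

lemma Cpl_cost (n : ℕ) (hn : 1 ≤ n) :
    ∫ p : R2 × R2, ‖p.1 - p.2‖ ∂(Cpl n) = 1 / n := by
  have hsm : StronglyMeasurable (fun p : R2 × R2 => ‖p.1 - p.2‖) :=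
    (continuous_fst.sub continuous_snd).norm.stronglyMeasurable
  rw [Cpl, integral_atomic2 _ _ _ _ _ hsm]
  have hA : ∑ i ∈ Finset.Icc 1 n, ‖pt (i:ℝ) 0 - pt (Ai i) 0‖ = 1 := by
    have : ∀ i ∈ Finset.Icc 1 n, ‖pt (i:ℝ) 0 - pt (Ai i) 0‖
        = if i = 1 then (1:ℝ) else 0 := by
      intro i hi
      rw [pt_sub, sub_zero, norm_pt0, Ai]
      split
      · rename_i h; subst h; norm_num
      · simp
    rw [Finset.sum_congr rfl this, Finset.sum_ite_eq' (Finset.Icc 1 n) 1 (fun _ => (1:ℝ))]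
    rw [if_pos (Finset.mem_Icc.2 ⟨le_refl 1, hn⟩)]
  have hB : ∑ i ∈ Finset.Icc 1 n, ‖pt (i:ℝ) 0 - pt (Bi n i) 0‖ = 1 := by
    have : ∀ i ∈ Finset.Icc 1 n, ‖pt (i:ℝ) 0 - pt (Bi n i) 0‖
        = if i = n then (1:ℝ) else 0 := by
      intro i hi
      rw [pt_sub, sub_zero, norm_pt0, Bi]
      split
      · rename_i h; subst h; rw [show (i:ℝ) - ((i:ℝ)+1) = -1 by ring]; norm_num
      · simp
    rw [Finset.sum_congr rfl this, Finset.sum_ite_eq' (Finset.Icc 1 n) n (fun _ => (1:ℝ))]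
    rw [if_pos (Finset.mem_Icc.2 ⟨hn, le_refl n⟩)]
  rw [hA, hB]
  have ht : ((2 * n : ℝ≥0∞))⁻¹.toReal = (2*(n:ℝ))⁻¹ := by
    rw [ENNReal.toReal_inv]
    norm_num
  rw [ht]
  have hn0 : (n:ℝ) ≠ 0 := Nat.cast_ne_zero.2 (by omega)
  field_simp
  norm_num

lemma ftil_pt (n : ℕ) (a : ℝ) : ftil n (pt a 0) = gfun n a := rfl

lemma int_mu (n : ℕ) (hn : 1 ≤ n) :
    ∫ x, ftil n x ∂(muM n) = ((n:ℝ))⁻¹ * ∑ i ∈ Finset.Icc 1 n, gfun n (i:ℝ) := by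
  rw [muM, integral_atomic _ _ _ _ (lip_ftil n).continuous.stronglyMeasurable]
  simp only [ftil_pt]
  congr 1
  simp [ENNReal.toReal_inv]

lemma int_nu (n : ℕ) (hn : 1 ≤ n) :
    ∫ x, ftil n x ∂((muM n).bind (Pker 0))
      = (2*(n:ℝ))⁻¹ * ((∑ i ∈ Finset.Icc 1 n, gfun n ((i:ℝ)-1))
          + ∑ i ∈ Finset.Icc 1 n, gfun n ((i:ℝ)+1)) := by
  rw [nu_eq n, integral_atomic2 _ _ _ _ _ (lip_ftil n).continuous.stronglyMeasurable]
  simp only [ftil_pt]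
  congr 1
  rw [ENNReal.toReal_inv]
  norm_num

lemma key_diff (n : ℕ) (hn : 1 ≤ n) :
    (∫ x, ftil n x ∂(muM n)) - ∫ x, ftil n x ∂((muM n).bind (Pker 0)) = 1 / n := by
  rw [int_mu n hn, int_nu n hn]
  have hn0 : (n:ℝ) ≠ 0 := Nat.cast_ne_zero.2 (by omega)
  have hsum : (∑ i ∈ Finset.Icc 1 n, gfun n ((i:ℝ)-1)) + ∑ i ∈ Finset.Icc 1 n, gfun n ((i:ℝ)+1)
      = 2 * (∑ i ∈ Finset.Icc 1 n, gfun n (i:ℝ)) - 2 := by linarith [tele_sum n hn]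
  rw [hsum]
  field_simp
  ring

lemma lower_bound (n : ℕ) (hn : 1 ≤ n) (π : Measure (R2 × R2))
    (hc : IsCoupling (muM n) ((muM n).bind (Pker 0)) π) :
    1 / (n:ℝ) ≤ ∫ p : R2 × R2, ‖p.1 - p.2‖ ∂π := by
  obtain ⟨hprob, hfst, hsnd⟩ := hc
  haveI := hprob
  have hlipf := lip_ftil n
  have hcontf := hlipf.continuous
  have hI1 : Integrable (fun p : R2 × R2 => ftil n p.1) π :=
    ⟨(hcontf.comp continuous_fst).aestronglyMeasurable,
      HasFiniteIntegral.of_bounded (C := (n:ℝ)+1)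
        (ae_of_all _ fun p => by simpa [Real.norm_eq_abs] using abs_ftil_le n p.1)⟩
  have hI2 : Integrable (fun p : R2 × R2 => ftil n p.2) π :=
    ⟨(hcontf.comp continuous_snd).aestronglyMeasurable,
      HasFiniteIntegral.of_bounded (C := (n:ℝ)+1)
        (ae_of_all _ fun p => by simpa [Real.norm_eq_abs] using abs_ftil_le n p.2)⟩
  have hEq1 : ∫ p : R2 × R2, ftil n p.1 ∂π = ∫ x, ftil n x ∂(muM n) := by
    conv_rhs => rw [← hfst]
    rw [integral_map measurable_fst.aemeasurable
      hcontf.stronglyMeasurable.aestronglyMeasurable]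
  have hEq2 : ∫ p : R2 × R2, ftil n p.2 ∂π = ∫ x, ftil n x ∂((muM n).bind (Pker 0)) := by
    conv_rhs => rw [← hsnd]
    rw [integral_map measurable_snd.aemeasurable
      hcontf.stronglyMeasurable.aestronglyMeasurable]
  -- cost integrability
  set K : Set R2 := {x : R2 | ‖x‖ ≤ (n:ℝ)+2} with hK
  have hKmeas : MeasurableSet K :=
    (isClosed_le continuous_norm continuous_const).measurableSet
  have hatom : ∀ a : ℝ, |a| ≤ (n:ℝ)+2 → (Measure.dirac (pt a 0) : Measure R2) Kᶜ = 0 := by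
    intro a ha
    rw [Measure.dirac_apply' _ hKmeas.compl]
    apply Set.indicator_of_notMem
    intro hmem
    exact hmem (by simpa [hK, norm_pt0] using ha)
  have hμ0 : muM n Kᶜ = 0 := by
    rw [muM, Measure.smul_apply, Measure.finset_sum_apply]
    rw [Finset.sum_eq_zero, smul_eq_mul, mul_zero]
    intro i hi
    have hle : (i:ℝ) ≤ (n:ℝ) := by exact_mod_cast (Finset.mem_Icc.1 hi).2
    exact hatom (i:ℝ) (by rw [abs_of_nonneg (Nat.cast_nonneg i)]; linarith)
  have hν0 : ((muM n).bind (Pker 0)) Kᶜ = 0 := by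
    rw [nu_eq n, Measure.smul_apply, Measure.coe_add, Pi.add_apply,
      Measure.finset_sum_apply, Measure.finset_sum_apply]
    rw [Finset.sum_eq_zero, Finset.sum_eq_zero, add_zero, smul_eq_mul, mul_zero]
    · intro i hi
      have h1 : (1:ℝ) ≤ (i:ℝ) := by exact_mod_cast (Finset.mem_Icc.1 hi).1
      have hle : (i:ℝ) ≤ (n:ℝ) := by exact_mod_cast (Finset.mem_Icc.1 hi).2
      exact hatom _ (by rw [abs_le]; constructor <;> linarith)
    · intro i hi
      have h1 : (1:ℝ) ≤ (i:ℝ) := by exact_mod_cast (Finset.mem_Icc.1 hi).1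
      have hle : (i:ℝ) ≤ (n:ℝ) := by exact_mod_cast (Finset.mem_Icc.1 hi).2
      exact hatom _ (by rw [abs_le]; constructor <;> linarith)
  have ae1 : ∀ᵐ p : R2 × R2 ∂π, p.1 ∈ K := by
    rw [ae_iff]
    have : {p : R2 × R2 | ¬ p.1 ∈ K} = Prod.fst ⁻¹' Kᶜ := rfl
    rw [this, ← Measure.map_apply measurable_fst hKmeas.compl, hfst]
    exact hμ0
  have ae2 : ∀ᵐ p : R2 × R2 ∂π, p.2 ∈ K := by
    rw [ae_iff]
    have : {p : R2 × R2 | ¬ p.2 ∈ K} = Prod.snd ⁻¹' Kᶜ := rfl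
    rw [this, ← Measure.map_apply measurable_snd hKmeas.compl, hsnd]
    exact hν0
  have hcostInt : Integrable (fun p : R2 × R2 => ‖p.1 - p.2‖) π := by
    refine ⟨(continuous_fst.sub continuous_snd).norm.aestronglyMeasurable,
      HasFiniteIntegral.of_bounded (C := 2*(n:ℝ)+4) ?_⟩
    filter_upwards [ae1, ae2] with p h1 h2
    have hb1 : ‖p.1‖ ≤ (n:ℝ)+2 := h1
    have hb2 : ‖p.2‖ ≤ (n:ℝ)+2 := h2
    rw [Real.norm_eq_abs, abs_of_nonneg (norm_nonneg _)]
    calc ‖p.1 - p.2‖ ≤ ‖p.1‖ + ‖p.2‖ := norm_sub_le _ _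
    _ ≤ 2*(n:ℝ)+4 := by linarith
  have hle : ∫ p : R2 × R2, (ftil n p.1 - ftil n p.2) ∂π
      ≤ ∫ p : R2 × R2, ‖p.1 - p.2‖ ∂π := by
    apply integral_mono (hI1.sub hI2) hcostInt
    intro p
    have h2 : |ftil n p.1 - ftil n p.2| ≤ ‖p.1 - p.2‖ := by
      have := hlipf.dist_le_mul p.1 p.2
      rwa [NNReal.coe_one, one_mul, Real.dist_eq, dist_eq_norm] at this
    have h1 : ftil n p.1 - ftil n p.2 ≤ |ftil n p.1 - ftil n p.2| := le_abs_self _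
    exact le_trans h1 h2
  rw [integral_sub hI1 hI2, hEq1, hEq2, key_diff n hn] at hle
  exact hle


/-- `W₁(μ_n, μ_n P_0) = 1/n`. -/
theorem stmt15 (n : ℕ) (hn : 1 ≤ n) :
    W1 (muM n) ((muM n).bind (Pker 0)) = 1 / n := by
  have hmem : (1 / (n:ℝ)) ∈ {r | ∃ π : Measure (R2 × R2),
      IsCoupling (muM n) ((muM n).bind (Pker 0)) π ∧ ∫ p, ‖p.1 - p.2‖ ∂π = r} :=
    ⟨Cpl n, ⟨Cpl_prob n hn, Cpl_fst n hn, Cpl_snd n hn⟩, Cpl_cost n hn⟩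
  have hlb : ∀ r ∈ {r | ∃ π : Measure (R2 × R2),
      IsCoupling (muM n) ((muM n).bind (Pker 0)) π ∧ ∫ p, ‖p.1 - p.2‖ ∂π = r},
      1 / (n:ℝ) ≤ r := by
    rintro r ⟨π, hc, hint⟩
    rw [← hint]
    exact lower_bound n hn π hc
  rw [W1]
  exact le_antisymm (csInf_le ⟨1/(n:ℝ), hlb⟩ hmem) (le_csInf ⟨_, hmem⟩ hlb)
end
end
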